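/- arXiv:2306.08992 — 2 statements merged into one kernel-verified Lean document; each statement's English description precedes it below -/
import Mathlib

section
/- Let N be a natural number, m : Fin N → ℝ with m i > 0, and let r, v : Fin N → EuclideanSpace ℝ (Fin 3) be the positions and velocities of N material points. Let e_z and e_Z be unit vectors in ℝ³, define the angular momentum G := ∑ i, m i • (r i ×₃ v i), assume G ≠ 0, set e₃ := ‖G‖⁻¹ • G, and let n, e₂ ∈ ℝ³ satisfy ⟪n, G⟫ = 0 and ⟪e₂, G⟫ = 0. Suppose for each i the linear map D i : (Fin 5 → ℝ) →ₗ[ℝ] EuclideanSpace ℝ (Fin 3) (the differential of the position of the i-th point with respect to the Andoyer coordinates (l, g, ϑ, χ, ρ)) satisfies D i δ = δ 0 • (e_z ×₃ r i) + δ 1 • (e₃ ×₃ r i) + δ 2 • (e_Z ×₃ r i) + δ 3 • (n ×₃ r i) + δ 4 • (e₂ ×₃ r i) for all δ. Then for every δ : Fin 5 → ℝ, ∑ i, m i * ⟪v i, D i δ⟫ = ⟪G, e_z⟫ * δ 0 + ‖G‖ * δ 1 + ⟪G, e_Z⟫ * δ 2. (This is the canonicity identity ∑ m_i ṙ_i ·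 dr_i = L dl + G dg + Θ dϑ for the Andoyer variables, where L = G·e_z, G = |G|, Θ = G·e_Z.) -/
open scoped RealInnerProductSpace

/-- Cross product on `EuclideanSpace ℝ (Fin 3)`. -/
noncomputable def cross3 (a b : EuclideanSpace ℝ (Fin 3)) : EuclideanSpace ℝ (Fin 3) :=
  (WithLp.equiv 2 (Fin 3 → ℝ)).symm
    (crossProduct ((WithLp.equiv 2 (Fin 3 → ℝ)) a) ((WithLp.equiv 2 (Fin 3 → ℝ)) b))

lemma inner_cross3 (a r v : EuclideanSpace ℝ (Fin 3)) :
    ⟪v, cross3 a r⟫ = ⟪a, cross3 r v⟫ := by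
  simp [cross3, crossProduct, PiLp.inner_apply, Fin.sum_univ_three, WithLp.equiv_apply,
    PiLp.toLp_apply]
  ring

/-- The canonicity identity `∑ mᵢ ṙᵢ ⬝ drᵢ = L dl + G dg + Θ dϑ` for the Andoyer variables,
where `L = G ⬝ e_z`, `G = ‖G‖`, `Θ = G ⬝ e_Z`. -/
theorem andoyer_canonicity
    (N : ℕ) (m : Fin N → ℝ) (hm : ∀ i, m i > 0)
    (r v : Fin N → EuclideanSpace ℝ (Fin 3))
    (e_z e_Z : EuclideanSpace ℝ (Fin 3)) (hez : ‖e_z‖ = 1) (heZ : ‖e_Z‖ = 1)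
    (G : EuclideanSpace ℝ (Fin 3)) (hG : G = ∑ i, m i • cross3 (r i) (v i)) (hG0 : G ≠ 0)
    (e₃ : EuclideanSpace ℝ (Fin 3)) (he₃ : e₃ = ‖G‖⁻¹ • G)
    (n e₂ : EuclideanSpace ℝ (Fin 3)) (hn : ⟪n, G⟫ = 0) (he₂ : ⟪e₂, G⟫ = 0)
    (D : Fin N → (Fin 5 → ℝ) →ₗ[ℝ] EuclideanSpace ℝ (Fin 3))
    (hD : ∀ i (δ : Fin 5 → ℝ), D i δ =
        δ 0 • cross3 e_z (r i) + δ 1 • cross3 e₃ (r i) + δ 2 • cross3 e_Z (r i)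
          + δ 3 • cross3 n (r i) + δ 4 • cross3 e₂ (r i))
    (δ : Fin 5 → ℝ) :
    ∑ i, m i * ⟪v i, D i δ⟫ = ⟪G, e_z⟫ * δ 0 + ‖G‖ * δ 1 + ⟪G, e_Z⟫ * δ 2 := by
  have key : ∀ a : EuclideanSpace ℝ (Fin 3),
      ∑ i, m i * ⟪a, cross3 (r i) (v i)⟫ = ⟪a, G⟫ := by
    intro a
    rw [hG, inner_sum]
    simp only [real_inner_smul_right]
  have expand : ∑ i, m i * ⟪v i, D i δ⟫ =
      δ 0 * ⟪e_z, G⟫ + δ 1 * ⟪e₃, G⟫ + δ 2 * ⟪e_Z, G⟫ + δ 3 * ⟪n, G⟫ + δ 4 * ⟪e₂, G⟫ := by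
    rw [← key e_z, ← key e₃, ← key e_Z, ← key n, ← key e₂]
    simp only [hD, inner_add_right, real_inner_smul_right, inner_cross3, mul_add,
      Finset.sum_add_distrib, Finset.mul_sum]
    congr 1 <;> [skip; exact Finset.sum_congr rfl fun i _ => by ring]
    congr 1 <;> [skip; exact Finset.sum_congr rfl fun i _ => by ring]
    congr 1 <;> [skip; exact Finset.sum_congr rfl fun i _ => by ring]
    congr 1 <;> exact Finset.sum_congr rfl fun i _ => by ring
  have he₃G : ⟪e₃, G⟫ = ‖G‖ := by
    rw [he₃, real_inner_smul_left, real_inner_self_eq_norm_sq]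
    field_simp [norm_ne_zero_iff.mpr hG0]
  rw [expand, he₃G, hn, he₂, real_inner_comm G e_z, real_inner_comm G e_Z]
  ring
end

section
/- Let R : ℝ → Matrix (Fin 3) (Fin 3) ℝ be differentiable, and suppose that for every t, (R t)ᵀ * (R t) = 1. Then for every t there exists a vector ω : Fin 3 → ℝ (the angular velocity) such that for every a : Fin 3 → ℝ, (deriv R t).mulVec a = ω ×₃ ((R t).mulVec a). Equivalently, the velocity ṙ of any point of the rigid body with position r = R(t) a satisfies ṙ = ω × r. -/
open scoped Matrix

attribute [local instance] Matrix.normedAddCommGroup Matrix.normedSpace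

/-- For a rigid rotation `t ↦ R t` (a differentiable curve of orthogonal matrices), at each
instant there is an angular velocity vector `ω` such that the velocity of any material point
with body-frame position `a` (absolute position `r = R t a`) is `ṙ = ω ×₃ r`. -/
theorem angular_velocity_exists (R : ℝ → Matrix (Fin 3) (Fin 3) ℝ)
    (hR : Differentiable ℝ R) (horth : ∀ t, (R t)ᵀ * R t = 1) (t : ℝ) :
    ∃ ω : Fin 3 → ℝ, ∀ a : Fin 3 → ℝ,
      (deriv R t).mulVec a = crossProduct ω ((R t).mulVec a) := by
  set R' := deriv R t with hR'
  -- entrywise derivative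
  have hent : ∀ i j : Fin 3, HasDerivAt (fun s => R s i j) (R' i j) t := fun i j =>
    (Matrix.entryLinearMap ℝ ℝ i j).toContinuousLinearMap.hasFDerivAt.comp_hasDerivAt t
      (hR t).hasDerivAt
  -- derivative of the orthogonality relation, entrywise
  have hkey : (R')ᵀ * R t + (R t)ᵀ * R' = 0 := by
    ext i j
    have h1 : HasDerivAt (fun s => ((R s)ᵀ * R s) i j)
        (((R')ᵀ * R t + (R t)ᵀ * R') i j) t := by
      have : HasDerivAt (fun s => ∑ k : Fin 3, R s k i * R s k j)
          (∑ k : Fin 3, (R' k i * R t k j + R t k i * R' k j)) t :=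
        HasDerivAt.fun_sum fun k _ => (hent k i).mul (hent k j)
      have hf : (fun s => ((R s)ᵀ * R s) i j) = fun s => ∑ k : Fin 3, R s k i * R s k j := by
        funext s; simp [Matrix.mul_apply, Matrix.transpose_apply]
      have hv : ((R')ᵀ * R t + (R t)ᵀ * R') i j
          = ∑ k : Fin 3, (R' k i * R t k j + R t k i * R' k j) := by
        simp [Matrix.mul_apply, Matrix.transpose_apply, Matrix.add_apply, Finset.sum_add_distrib]
      rw [hf, hv]; exact this
    have h2 : HasDerivAt (fun _ : ℝ => ((1 : Matrix (Fin 3) (Fin 3) ℝ) i j)) 0 t :=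
      hasDerivAt_const _ _
    have heq : (fun s => ((R s)ᵀ * R s) i j) = fun _ : ℝ => ((1 : Matrix (Fin 3) (Fin 3) ℝ) i j) := by
      funext s; rw [horth s]
    rw [heq] at h1
    have := h1.unique h2
    simpa using this
  have hRRT : R t * (R t)ᵀ = 1 := mul_eq_one_comm.mp (horth t)
  set A := R' * (R t)ᵀ with hA
  have hskew : Aᵀ = -A := by
    have h : R t * ((R')ᵀ * R t + (R t)ᵀ * R') * (R t)ᵀ = 0 := by rw [hkey]; simp
    have : R t * (R')ᵀ + R' * (R t)ᵀ = 0 := by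
      calc R t * (R')ᵀ + R' * (R t)ᵀ
          = R t * ((R')ᵀ * R t + (R t)ᵀ * R') * (R t)ᵀ := by
            rw [Matrix.mul_add, Matrix.add_mul]
            rw [show R t * ((R')ᵀ * R t) * (R t)ᵀ = R t * (R')ᵀ * (R t * (R t)ᵀ) by
              noncomm_ring, hRRT,
              show R t * ((R t)ᵀ * R') * (R t)ᵀ = (R t * (R t)ᵀ) * (R' * (R t)ᵀ) by noncomm_ring,
              hRRT]
            simp
        _ = 0 := h
    have h2 : R t * (R')ᵀ = -(R' * (R t)ᵀ) := by linear_combination (norm := noncomm_ring) this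
    rw [hA, Matrix.transpose_mul, Matrix.transpose_transpose, h2]
  -- entries of A
  have hAe : ∀ i j : Fin 3, A j i = -A i j := fun i j => by
    have := congrFun (congrFun hskew i) j
    simpa [Matrix.transpose_apply, Matrix.neg_apply] using this
  refine ⟨![A 2 1, A 0 2, A 1 0], fun a => ?_⟩
  have hAdiag : ∀ i : Fin 3, A i i = 0 := fun i => by
    have := hAe i i; linarith
  have hmain : ∀ v : Fin 3 → ℝ, A.mulVec v = crossProduct ![A 2 1, A 0 2, A 1 0] v := by
    intro v
    funext i
    fin_cases i <;>
      simp [Matrix.mulVec, dotProduct, crossProduct, Fin.sum_univ_three,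
        hAdiag, hAe 1 0, hAe 2 0, hAe 2 1] <;> ring
  have : R'.mulVec a = A.mulVec ((R t).mulVec a) := by
    rw [Matrix.mulVec_mulVec, hA,
      show R' * (R t)ᵀ * R t = R' * ((R t)ᵀ * R t) by noncomm_ring, horth t, Matrix.mul_one]
  rw [this, hmain]
end
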